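/- Let a robot brake at rate B > 0 from speed v₀ ≥ 0 while a moving obstacle approaches at speed at most V ≥ 0. If the initial separation d₀ satisfies d₀ > v₀²/(2B) + V·v₀/B + D (with safety radius D ≥ 0), then at every time t ≥ 0 the separation remains greater than D; in particular no collision occurs before the robot stops. -/
import Mathlib

/-- Safe braking: if initial separation d₀ > v₀²/(2B) + V v₀/B + D, then during the
braking interval t ∈ [0, v₀/B] the separation stays above D. -/
theorem stmt_1 (v₀ B V D d₀ : ℝ) (hv₀ : 0 ≤ v₀) (hB : 0 < B) (hV : 0 ≤ V) (hD : 0 ≤ D)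
    (hsep : d₀ > v₀ ^ 2 / (2 * B) + V * v₀ / B + D) :
    ∀ t ∈ Set.Icc (0:ℝ) (v₀ / B),
      d₀ - (v₀ * t - B * t ^ 2 / 2) - V * t > D := by
  intro t ht
  obtain ⟨ht0, ht1⟩ := ht
  have h1 : B * t ≤ v₀ := by
    have := (le_div_iff₀ hB).mp ht1
    nlinarith
  have h2 : v₀ * t - B * t ^ 2 / 2 ≤ v₀ ^ 2 / (2 * B) := by
    rw [le_div_iff₀ (by positivity)]
    nlinarith [sq_nonneg (v₀ - B * t)]
  have h3 : V * t ≤ V * v₀ / B := by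
    rw [le_div_iff₀ hB]
    nlinarith
  linarith
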